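/- arXiv:0709.0290 — 3 statements merged into one kernel-verified Lean document; each statement's English description precedes it below -/
import Mathlib

section
/- For n ≥ 4, the complete graph K_n is not Z_2×Z_2-cordial. -/
open SimpleGraph

/-- Induced edge label: the sum of the endpoint labels. -/
def edgeLabel {V A : Type*} [AddCommMonoid A] (f : V → A) : Sym2 V → A :=
  Sym2.lift ⟨fun u v => f u + f v, fun u v => add_comm (f u) (f v)⟩

/-- `f` is an `A`-cordial labeling of `G`: vertex label classes and induced
edge label classes are balanced. -/
def IsCordialLabeling {V : Type*} [Fintype V] (G : SimpleGraph V) {A : Type*} [AddCommMonoid A]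
    (f : V → A) : Prop :=
  (∀ a b : A, |({v : V | f v = a}.ncard : ℤ) - ({v : V | f v = b}.ncard : ℤ)| ≤ 1) ∧
  (∀ a b : A, |({e ∈ G.edgeSet | edgeLabel f e = a}.ncard : ℤ)
      - ({e ∈ G.edgeSet | edgeLabel f e = b}.ncard : ℤ)| ≤ 1)

/-- `G` is `A`-cordial. -/
def IsCordial {V : Type*} [Fintype V] (G : SimpleGraph V) (A : Type*) [AddCommMonoid A] : Prop :=
  ∃ f : V → A, IsCordialLabeling G f


/-! Let `N_a` be the number of vertices labelled `a` and `E_c` the number of edges labelled `c`.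
Since `x + y = 0 ↔ x = y` in `Z₂ × Z₂`, the edges labelled `0` are the pairs of distinct vertices
in a common class, so `2 E₀ + n = ∑ N_a²`. Vertex balance forces the `N_a` to take at most two
adjacent values, whence `4 ∑ N_a² ≤ n² + 4`; edge balance gives `n(n-1)/2 ≤ 4 E₀ + 3`.
Together, `n² - n ≤ 4 ∑ N_a² - 4n + 6 ≤ n² - 4n + 10`, i.e. `n ≤ 3`. -/

open Finset

theorem Finset.four_mul_card_mul_sum_sq_sub_sq_sum_le_card_sq {ι : Type*} (s : Finset ι)
    (x : ι → ℤ) (hx : ∀ i ∈ s, ∀ j ∈ s, |x i - x j| ≤ 1) :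
    4 * (#s * ∑ i ∈ s, x i ^ 2 - (∑ i ∈ s, x i) ^ 2) ≤ #s ^ 2 := by
  rcases s.eq_empty_or_nonempty with rfl | hs
  · simp
  obtain ⟨i₀, hi₀, hmin⟩ := s.exists_min_image x hs
  set q := x i₀
  -- Shifted by the minimum, every value is `0` or `1`; with `r = ∑ (x i - q)` the left side
  -- becomes `4 (#s r - r²)`.
  have hsq : ∀ i ∈ s, (x i - q) ^ 2 = x i - q := fun i hi => by
    have hq := hmin i hi
    have h := (abs_le.1 (hx i hi i₀ hi₀)).2
    obtain h | h : x i - q = 0 ∨ x i - q = 1 := by omega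
    all_goals rw [h]; norm_num
  have hsum_sq : ∑ i ∈ s, x i ^ 2 = (1 + 2 * q) * ∑ i ∈ s, (x i - q) + #s * q ^ 2 :=
    calc ∑ i ∈ s, x i ^ 2 = ∑ i ∈ s, ((x i - q) ^ 2 + 2 * q * (x i - q) + q ^ 2) :=
          sum_congr rfl fun i _ => by ring
      _ = _ := by
          rw [sum_add_distrib, sum_add_distrib, sum_congr rfl hsq, ← mul_sum]
          simp only [sum_const, nsmul_eq_mul]; ring
  have hsum : ∑ i ∈ s, x i = ∑ i ∈ s, (x i - q) + #s * q := by
    simp [sum_sub_distrib]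
  rw [hsum_sq, hsum]
  nlinarith [sq_nonneg ((#s : ℤ) - 2 * ∑ i ∈ s, (x i - q))]

theorem Set.ncard_setOf_eq_card_filter {α : Type*} [Fintype α] (p : α → Prop)
    [DecidablePred p] : {x | p x}.ncard = #{x | p x} := by
  rw [← Set.ncard_coe_finset, coe_filter]; simp

theorem SimpleGraph.ncard_sep_edgeSet {V : Type*} (G : SimpleGraph V) [Fintype G.edgeSet]
    (p : Sym2 V → Prop) [DecidablePred p] :
    {e ∈ G.edgeSet | p e}.ncard = #{e ∈ G.edgeFinset | p e} := by
  rw [← Set.ncard_coe_finset, coe_filter]; simp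

theorem card_filter_fst_eq_snd_eq_sum_sq {V α : Type*} [Fintype V] [Fintype α] [DecidableEq α]
    (f : V → α) : #{p : V × V | f p.1 = f p.2} = ∑ a, #{v | f v = a} ^ 2 := by
  rw [card_eq_sum_card_fiberwise (f := fun p => f p.1) (t := univ) fun _ _ => mem_univ _]
  refine sum_congr rfl fun a _ => ?_
  rw [sq, ← card_product, filter_filter]
  congr 1
  ext ⟨u, v⟩
  simp only [mem_filter, mem_univ, true_and, mem_product]
  constructor
  · rintro ⟨h, rfl⟩; exact ⟨rfl, h.symm⟩
  · rintro ⟨rfl, h⟩; exact ⟨h.symm, rfl⟩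

theorem edgeLabel_mk {V A : Type*} [AddCommMonoid A] (f : V → A) (u v : V) :
    edgeLabel f s(u, v) = f u + f v := rfl

theorem edgeLabel_mk_eq_zero_iff {V A : Type*} [AddCommGroup A] [Module (ZMod 2) A]
    {f : V → A} {u v : V} : edgeLabel f s(u, v) = 0 ↔ f u = f v := by
  rw [edgeLabel_mk, add_eq_zero_iff_eq_neg, ZModModule.neg_eq_self]

theorem two_mul_card_edgeLabel_eq_zero_add_card {V A : Type*} [Fintype V] [DecidableEq V]
    [AddCommGroup A] [Module (ZMod 2) A] [Fintype A] [DecidableEq A] (f : V → A) :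
    2 * #{e ∈ (⊤ : SimpleGraph V).edgeFinset | edgeLabel f e = 0} + Fintype.card V =
      ∑ a, #{v | f v = a} ^ 2 := by
  have handshake : 2 * #{e ∈ (⊤ : SimpleGraph V).edgeFinset | edgeLabel f e = 0} =
      #{p : V × V | f p.1 = f p.2 ∧ p.1 ≠ p.2} := by
    set G := SimpleGraph.fromEdgeSet {e | edgeLabel f e = 0}
    calc 2 * #{e ∈ (⊤ : SimpleGraph V).edgeFinset | edgeLabel f e = 0} = 2 * #G.edgeFinset := by
          congr 2; ext e; induction e; simp [G, and_comm]
      _ = #{p : V × V | G.Adj p.1 p.2} := by convert G.two_mul_card_edgeFinset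
      _ = _ := by congr 1; ext ⟨u, v⟩; simp [G, edgeLabel_mk_eq_zero_iff]
  have hdiag : #{p : V × V | f p.1 = f p.2 ∧ p.1 = p.2} = Fintype.card V := by
    rw [← card_univ, ← diag_card (univ : Finset V)]
    exact congrArg card (by ext ⟨u, v⟩; simp [mem_diag]; aesop)
  rw [handshake, ← card_filter_fst_eq_snd_eq_sum_sq, ← hdiag, ← filter_filter, ← filter_filter,
    add_comm, card_filter_add_card_filter_not]

namespace IsCordialLabeling

variable {V A : Type*} [Fintype V] [AddCommMonoid A] [Fintype A] [DecidableEq A]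
  {G : SimpleGraph V} {f : V → A}

theorem four_mul_card_mul_sum_sq_sub_sq_le (hf : IsCordialLabeling G f) :
    4 * (Fintype.card A * ∑ a, (#{v | f v = a} : ℤ) ^ 2 - (Fintype.card V : ℤ) ^ 2) ≤
      Fintype.card A ^ 2 := by
  have hsum : ∑ a, (#{v | f v = a} : ℤ) = Fintype.card V := by
    rw [← card_univ, card_eq_sum_card_fiberwise (f := f) (t := univ) fun _ _ => mem_univ _]
    push_cast; rfl
  rw [← hsum, ← card_univ]
  refine univ.four_mul_card_mul_sum_sq_sub_sq_sum_le_card_sq _ fun a _ b _ => ?_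
  simpa only [Set.ncard_setOf_eq_card_filter] using hf.1 a b

theorem card_edgeFinset_add_one_le [Fintype G.edgeSet] (hf : IsCordialLabeling G f) (a : A) :
    #G.edgeFinset + 1 ≤ Fintype.card A * (#{e ∈ G.edgeFinset | edgeLabel f e = a} + 1) := by
  have hle : ∀ c, #{e ∈ G.edgeFinset | edgeLabel f e = c} + (if c = a then 1 else 0) ≤
      #{e ∈ G.edgeFinset | edgeLabel f e = a} + 1 := fun c => by
    have := abs_le.1 (hf.2 c a)
    simp only [SimpleGraph.ncard_sep_edgeSet] at this
    split_ifs with h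
    · rw [h]
    · omega
  calc #G.edgeFinset + 1
      = ∑ c, (#{e ∈ G.edgeFinset | edgeLabel f e = c} + if c = a then 1 else 0) := by
        rw [sum_add_distrib, sum_ite_eq', if_pos (mem_univ a),
          card_eq_sum_card_fiberwise (f := edgeLabel f) (t := univ) fun _ _ => mem_univ _]
    _ ≤ ∑ _c : A, (#{e ∈ G.edgeFinset | edgeLabel f e = a} + 1) := sum_le_sum fun c _ => hle c
    _ = _ := by rw [sum_const, card_univ, smul_eq_mul]

end IsCordialLabeling

theorem Nat.choose_two_mul_two_add_self (n : ℕ) : n.choose 2 * 2 + n = n * n := by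
  rw [Nat.choose_two_right, Nat.div_two_mul_two_of_even (Nat.even_mul_pred_self n)]
  cases n <;> simp [Nat.mul_succ]

theorem stmt_1 : ∀ n : ℕ, 4 ≤ n →
    ¬ IsCordial (⊤ : SimpleGraph (Fin n)) (ZMod 2 × ZMod 2) := by
  rintro n hn ⟨f, hf⟩
  have hedges := hf.card_edgeFinset_add_one_le 0
  have hvertices := hf.four_mul_card_mul_sum_sq_sub_sq_le
  have hzero := two_mul_card_edgeLabel_eq_zero_add_card f
  have hchoose := Nat.choose_two_mul_two_add_self n
  rw [SimpleGraph.card_edgeFinset_top_eq_card_choose_two] at hedges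
  simp only [Fintype.card_fin, Fintype.card_prod, ZMod.card] at hedges hvertices hzero
  zify at hedges hzero hchoose hn
  push_cast at hzero hvertices hedges
  nlinarith
end

section
/- The star K_{1,n} is Z_2×Z_2-cordial for every n ≥ 1. -/
open SimpleGraph

/-!
Put the centre at position `0` and the `i`-th leaf at position `i + 1`, and give position `k` the
label `e k`, where `e : ZMod m ≃ A` (with `m = |A|`) sends `0` to `0`. Each label is then used
on the positions `0, …, n` as evenly as residues mod `m` are. Since the centre carries `0`, the
edge to the leaf at position `k` also carries `e k`, so the edges see the positions `1, …, n`,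
again a run of consecutive residues.
-/

open Function Set

variable {ι κ A B : Type*}

def IsBalancedOn (s : Set ι) (g : ι → A) : Prop :=
  ∀ a b : A, |({x ∈ s | g x = a}.ncard : ℤ) - ({x ∈ s | g x = b}.ncard : ℤ)| ≤ 1

theorem isBalancedOn_image {φ : κ → ι} (hφ : Injective φ) (s : Set κ) (g : ι → A) :
    IsBalancedOn (φ '' s) g ↔ IsBalancedOn s (g ∘ φ) := by
  have hclass : ∀ a, {x ∈ φ '' s | g x = a} = φ '' {y ∈ s | g (φ y) = a} := by
    intro a
    ext x
    constructor
    · rintro ⟨⟨y, hy, rfl⟩, hgy⟩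
      exact ⟨y, ⟨hy, hgy⟩, rfl⟩
    · rintro ⟨y, ⟨hy, hgy⟩, rfl⟩
      exact ⟨⟨y, hy, rfl⟩, hgy⟩
  simp only [IsBalancedOn, hclass, ncard_image_of_injective _ hφ, comp_apply]

theorem isBalancedOn_univ_comp {φ : κ → ι} (hφ : Bijective φ) (g : ι → A) :
    IsBalancedOn univ (g ∘ φ) ↔ IsBalancedOn univ g := by
  rw [← isBalancedOn_image hφ.injective, image_univ_of_surjective hφ.surjective]

theorem IsBalancedOn.equiv_comp {s : Set ι} {g : ι → B} (h : IsBalancedOn s g) (e : B ≃ A) :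
    IsBalancedOn s (e ∘ g) := by
  intro a b
  simpa only [comp_apply, ← e.eq_symm_apply] using h (e.symm a) (e.symm b)

theorem isCordialLabeling_iff [Fintype ι] [AddCommMonoid A] (G : SimpleGraph ι) (f : ι → A) :
    IsCordialLabeling G f ↔ IsBalancedOn univ f ∧ IsBalancedOn G.edgeSet (edgeLabel f) := by
  simp only [IsCordialLabeling, IsBalancedOn, mem_univ, true_and]

theorem ncard_setOf_natCast_eq (m N : ℕ) [NeZero m] (c : ZMod m) :
    {k : Fin N | ((k : ℕ) : ZMod m) = c}.ncard = N / m + if c.val % m < N % m then 1 else 0 := by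
  rw [← Nat.count_modEq_card _ (NeZero.pos m), Nat.count_eq_card_filter_range,
    ← ncard_coe_finset, ← ncard_image_of_injective _ Fin.val_injective]
  congr 1
  ext k
  conv_lhs => rw [← ZMod.natCast_zmod_val c]
  simp only [mem_image, mem_ofPred_eq, Finset.coe_filter, Finset.mem_range,
    ZMod.natCast_eq_natCast_iff]
  exact ⟨fun ⟨i, hi, hik⟩ => hik ▸ ⟨i.isLt, hi⟩, fun ⟨hk, hkc⟩ => ⟨⟨k, hk⟩, hkc, rfl⟩⟩

theorem isBalancedOn_univ_natCast_add (m N : ℕ) [NeZero m] (c : ZMod m) :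
    IsBalancedOn univ (fun k : Fin N => ((k : ℕ) : ZMod m) + c) := by
  intro a b
  simp only [mem_univ, true_and, ← eq_sub_iff_add_eq, ncard_setOf_natCast_eq]
  rw [abs_le]
  split_ifs <;> omega

theorem injective_sym2_inl_inr : Injective (fun x : κ × ι => s(Sum.inl x.1, Sum.inr x.2)) := by
  rintro ⟨a, b⟩ ⟨a', b'⟩ h
  simpa using h

theorem exists_equiv_zmod_card_map_zero [Zero A] [Fintype A] [NeZero (Fintype.card A)] :
    ∃ e : ZMod (Fintype.card A) ≃ A, e 0 = 0 := by
  classical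
  let e₀ : ZMod (Fintype.card A) ≃ A := Fintype.equivOfCardEq (ZMod.card _)
  exact ⟨e₀.trans (Equiv.swap (e₀ 0) 0), Equiv.swap_apply_left _ _⟩

theorem isCordial_completeBipartiteGraph_fin_one [AddCommMonoid A] [Fintype A] (n : ℕ) :
    IsCordial (completeBipartiteGraph (Fin 1) (Fin n)) A := by
  have : NeZero (Fintype.card A) := ⟨Fintype.card_ne_zero⟩
  set m := Fintype.card A
  obtain ⟨e, he⟩ := exists_equiv_zmod_card_map_zero (A := A)
  let pos : Fin (1 + n) → ZMod m := fun k => ((k : ℕ) : ZMod m)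
  refine ⟨e ∘ pos ∘ finSumFinEquiv, (isCordialLabeling_iff _ _).2 ⟨?_, ?_⟩⟩
  · have hpos : IsBalancedOn univ pos := by
      simpa using isBalancedOn_univ_natCast_add m (1 + n) 0
    exact ((isBalancedOn_univ_comp finSumFinEquiv.bijective pos).2 hpos).equiv_comp e
  · have hedge : edgeLabel (e ∘ pos ∘ finSumFinEquiv) ∘
          (fun x : Fin 1 × Fin n => s(Sum.inl x.1, Sum.inr x.2)) =
        (e ∘ fun i : Fin n => ((i : ℕ) : ZMod m) + 1) ∘ Prod.snd := by
      funext ⟨x, i⟩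
      simp [edgeLabel, pos, he, add_comm]
    rw [edgeSet_completeBipartiteGraph, ← image_univ, isBalancedOn_image injective_sym2_inl_inr,
      hedge]
    exact (isBalancedOn_univ_comp (Equiv.uniqueProd (Fin n) (Fin 1)).bijective _).2
      ((isBalancedOn_univ_natCast_add m n 1).equiv_comp e)

theorem stmt_6 : ∀ n : ℕ, 1 ≤ n →
    IsCordial (completeBipartiteGraph (Fin 1) (Fin n)) (ZMod 2 × ZMod 2) :=
  fun n _ => isCordial_completeBipartiteGraph_fin_one n
end

section
/- If 4 divides m, then the complete bipartite graph K_{m,n} is Z_2×Z_2-cordial for every n ≥ 1. -/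
/-!
Label each side of `K_{m,n}` cyclically by an enumeration of the finite abelian group `A`.
Every label then occurs `⌊N/|A|⌋` or `⌊N/|A|⌋ + 1` times on a side of size `N`, and exactly
`m/|A|` times on the side of size `m`, since `|A| ∣ m`. Hence at every vertex `w` of the other
side exactly `m/|A|` edges carry a given label `c` (those whose other end is labelled
`c` minus the label of `w`), so every edge label occurs `n * m/|A|` times.
-/

open SimpleGraph

open Finset

variable {A V W : Type*}

lemma ncard_setOf_fin_eq_count (N : ℕ) (p : ℕ → Prop) [DecidablePred p] :
    {i : Fin N | p i}.ncard = Nat.count p N := by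
  rw [Nat.count_eq_card_filter_range, ← Set.ncard_coe_finset,
    ← Set.ncard_image_of_injective _ Fin.val_injective]
  congr 1
  ext x
  simp only [Set.mem_image, Set.mem_ofPred_eq, coe_filter, mem_range]
  exact ⟨fun ⟨i, hi, hx⟩ => hx ▸ ⟨i.isLt, hi⟩, fun ⟨hx, hp⟩ => ⟨⟨x, hx⟩, hp, rfl⟩⟩

def cyclicLabel {k : ℕ} [NeZero k] (e : Fin k ≃ A) (i : ℕ) : A := e (Fin.ofNat k i)

lemma ncard_cyclicLabel_eq {k : ℕ} [NeZero k] (e : Fin k ≃ A) (N : ℕ) (a : A) :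
    {i : Fin N | cyclicLabel e i = a}.ncard = N / k + if (e.symm a : ℕ) < N % k then 1 else 0 := by
  have hmod (i : ℕ) : cyclicLabel e i = a ↔ i ≡ e.symm a [MOD k] := by
    rw [cyclicLabel, ← e.eq_symm_apply, Fin.ext_iff, Fin.val_ofNat, Nat.ModEq,
      Nat.mod_eq_of_lt (e.symm a).isLt]
  classical
  simp_rw [hmod]
  rw [ncard_setOf_fin_eq_count N (· ≡ e.symm a [MOD k]), Nat.count_modEq_card _ (NeZero.pos k),
    Nat.mod_eq_of_lt (e.symm a).isLt]

lemma ncard_sumElim_eq [Finite V] [Finite W] (f : V → A) (g : W → A) (a : A) :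
    {x : V ⊕ W | Sum.elim f g x = a}.ncard = {v | f v = a}.ncard + {w | g w = a}.ncard := by
  rw [← Set.ncard_image_of_injective {v | f v = a} Sum.inl_injective,
    ← Set.ncard_image_of_injective {w | g w = a} Sum.inr_injective, ← Set.ncard_union_eq]
  · congr 1
    ext (v | w) <;> simp
  · exact Set.disjoint_left.2 (by rintro _ ⟨v, -, rfl⟩ ⟨w, -, hw⟩; cases hw)

lemma ncard_edgeLabel_completeBipartiteGraph [AddCommMonoid A] (f : V → A) (g : W → A) (c : A) :
    {e ∈ (completeBipartiteGraph V W).edgeSet | edgeLabel (Sum.elim f g) e = c}.ncard =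
      {p : V × W | f p.1 + g p.2 = c}.ncard := by
  rw [← Set.ncard_image_of_injective _ (f := fun p : V × W => s(Sum.inl p.1, Sum.inr p.2))
    (by intro p q h; simpa [Prod.ext_iff] using h)]
  congr 1
  ext e
  rw [edgeSet_completeBipartiteGraph]
  constructor
  · rintro ⟨⟨⟨v, w⟩, rfl⟩, h⟩
    exact ⟨(v, w), h, rfl⟩
  · rintro ⟨⟨v, w⟩, h, rfl⟩
    exact ⟨⟨(v, w), rfl⟩, h⟩

lemma ncard_add_eq_of_ncard_fiber [AddCommGroup A] [Finite V] [Fintype W] {f : V → A} {q : ℕ}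
    (hf : ∀ a, {v | f v = a}.ncard = q) (g : W → A) (c : A) :
    {p : V × W | f p.1 + g p.2 = c}.ncard = q * Fintype.card W := by
  have hfiber (w : W) : Nat.card {v // f v + g w = c} = q := by
    simp_rw [← eq_sub_iff_add_eq]
    exact hf _
  calc {p : V × W | f p.1 + g p.2 = c}.ncard
      = Nat.card (Σ w : W, {v // f v + g w = c}) :=
        Nat.card_congr ((Equiv.subtypeEquiv (Equiv.prodComm V W) fun _ => Iff.rfl).trans
          (Equiv.subtypeProdEquivSigmaSubtype fun w v => f v + g w = c))
    _ = q * Fintype.card W := by simp [Nat.card_sigma, hfiber, mul_comm]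

theorem isCordial_completeBipartiteGraph_of_card_dvd [AddCommGroup A] [Fintype A] {m : ℕ}
    (n : ℕ) (hm : Fintype.card A ∣ m) :
    IsCordial (completeBipartiteGraph (Fin m) (Fin n)) A := by
  classical
  set k := Fintype.card A
  set e : Fin k ≃ A := (Fintype.equivFin A).symm
  set f : Fin m → A := fun i => cyclicLabel e i
  set g : Fin n → A := fun j => cyclicLabel e j
  have hf (a : A) : {i | f i = a}.ncard = m / k := by
    simpa [Nat.mod_eq_zero_of_dvd hm] using ncard_cyclicLabel_eq e m a
  have hvertex (a : A) : {x | Sum.elim f g x = a}.ncard =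
      m / k + n / k + if (e.symm a : ℕ) < n % k then 1 else 0 := by
    rw [ncard_sumElim_eq, hf, ncard_cyclicLabel_eq, add_assoc]
  refine ⟨Sum.elim f g, fun a b => ?_, fun a b => ?_⟩
  · rw [hvertex a, hvertex b, abs_le]
    split_ifs <;> omega
  · simp only [ncard_edgeLabel_completeBipartiteGraph, ncard_add_eq_of_ncard_fiber hf]
    simp

theorem stmt_8 : ∀ m n : ℕ, 4 ∣ m → 1 ≤ n →
    IsCordial (completeBipartiteGraph (Fin m) (Fin n)) (ZMod 2 × ZMod 2) :=
  fun _ n hm _ => isCordial_completeBipartiteGraph_of_card_dvd n hm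
end
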